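/- Let v be positive C² with |∇_g v|_g > 0 and define A_v(f) = (v/|∇_g v|²_g)(∇_g v ·_g ∇_g f) + ½F_v^g f with F_v^g = vΔ_g v/|∇_g v|²_g − 1, and let P_{v,τ}^{(s)}(f) = Δ_g f + τ²(|∇_g v|²_g/v²)f. Then v^{−τ}Δ_g(v^τ f) = P_{v,τ}^{(s)}(f) + 2τ(|∇_g v|²_g/v²)A_v(f) for all smooth f and τ ≥ 1. -/

import Mathlib

noncomputable section
open scoped BigOperators
open Real

variable {n : ℕ}

/-- partial derivative in coordinate direction `i`. -/
def pd (i : Fin n) (f : (Fin n → ℝ) → ℝ) (x : Fin n → ℝ) : ℝ :=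
  fderiv ℝ f x (Pi.single i 1)

/-- the g-gradient ∇_g f = g⁻¹ ∇f. -/
def gGrad (ginv : (Fin n → ℝ) → Matrix (Fin n) (Fin n) ℝ)
    (f : (Fin n → ℝ) → ℝ) (x : Fin n → ℝ) : Fin n → ℝ :=
  fun i => ∑ j, ginv x i j * pd j f x

/-- divergence of a vector field. -/
def vdiv (X : (Fin n → ℝ) → Fin n → ℝ) (x : Fin n → ℝ) : ℝ :=
  ∑ i, pd i (fun y => X y i) x

/-- the g-Laplacian Δ_g f = div(g⁻¹∇f). -/
def gLap (ginv : (Fin n → ℝ) → Matrix (Fin n) (Fin n) ℝ)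
    (f : (Fin n → ℝ) → ℝ) (x : Fin n → ℝ) : ℝ :=
  vdiv (gGrad ginv f) x

/-- the g-pairing ∇_g u ·_g ∇_g f = ⟨g⁻¹∇u, ∇f⟩;
    in particular `gPair ginv f f = |∇_g f|²_g`. -/
def gPair (ginv : (Fin n → ℝ) → Matrix (Fin n) (Fin n) ℝ)
    (u f : (Fin n → ℝ) → ℝ) (x : Fin n → ℝ) : ℝ :=
  ∑ i, ∑ j, ginv x i j * pd i u x * pd j f x

/-- F_v^g = vΔ_g v/|∇_g v|²_g − 1. -/
def Fv (ginv : (Fin n → ℝ) → Matrix (Fin n) (Fin n) ℝ)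
    (v : (Fin n → ℝ) → ℝ) (x : Fin n → ℝ) : ℝ :=
  v x * gLap ginv v x / gPair ginv v v x - 1

/-- A_v(f) = (v/|∇_g v|²_g)(∇_g v·_g∇_g f) + ½F_v^g f. -/
def Av (ginv : (Fin n → ℝ) → Matrix (Fin n) (Fin n) ℝ)
    (v f : (Fin n → ℝ) → ℝ) (x : Fin n → ℝ) : ℝ :=
  v x / gPair ginv v v x * gPair ginv v f x + (1 / 2) * Fv ginv v x * f x

theorem pd_congr' {f g : (Fin n → ℝ) → ℝ} {x : Fin n → ℝ} (h : f =ᶠ[nhds x] g) (i : Fin n) :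
    pd i f x = pd i g x := by
  unfold pd; rw [h.fderiv_eq]

theorem pd_mul' {a b : (Fin n → ℝ) → ℝ} {x : Fin n → ℝ} (ha : DifferentiableAt ℝ a x)
    (hb : DifferentiableAt ℝ b x) (i : Fin n) :
    pd i (fun y => a y * b y) x = pd i a x * b x + a x * pd i b x := by
  unfold pd; rw [fderiv_fun_mul ha hb]; simp; ring

theorem pd_const_mul' {a : (Fin n → ℝ) → ℝ} {x : Fin n → ℝ} (ha : DifferentiableAt ℝ a x)
    (c : ℝ) (i : Fin n) : pd i (fun y => c * a y) x = c * pd i a x := by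
  unfold pd; rw [fderiv_const_mul ha]; simp

theorem pd_add' {a b : (Fin n → ℝ) → ℝ} {x : Fin n → ℝ} (ha : DifferentiableAt ℝ a x)
    (hb : DifferentiableAt ℝ b x) (i : Fin n) :
    pd i (fun y => a y + b y) x = pd i a x + pd i b x := by
  unfold pd; rw [fderiv_fun_add ha hb]; simp

theorem rpow_hasFDerivAt' {v : (Fin n → ℝ) → ℝ} {x : Fin n → ℝ} (hv : DifferentiableAt ℝ v x)
    (hvx : v x ≠ 0) (τ : ℝ) :
    HasFDerivAt (fun y => v y ^ τ) ((τ * v x ^ (τ - 1)) • fderiv ℝ v x) x :=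
  (Real.hasDerivAt_rpow_const (Or.inl hvx)).comp_hasFDerivAt x hv.hasFDerivAt

theorem pd_rpow' {v : (Fin n → ℝ) → ℝ} {x : Fin n → ℝ} (hv : DifferentiableAt ℝ v x)
    (hvx : v x ≠ 0) (τ : ℝ) (i : Fin n) :
    pd i (fun y => v y ^ τ) x = τ * v x ^ (τ - 1) * pd i v x := by
  unfold pd; rw [(rpow_hasFDerivAt' hv hvx τ).fderiv]; simp

theorem pd_diff' {U : Set (Fin n → ℝ)} (hU : IsOpen U) {v : (Fin n → ℝ) → ℝ}
    (hv : ContDiffOn ℝ 2 v U) {x : Fin n → ℝ} (hx : x ∈ U) (j : Fin n) :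
    DifferentiableAt ℝ (pd j v) x := by
  have h1 : ContDiffOn ℝ 1 (fderivWithin ℝ v U) U :=
    hv.fderivWithin hU.uniqueDiffOn (by norm_num)
  have h2 : DifferentiableAt ℝ (fderivWithin ℝ v U) x :=
    ((h1.differentiableOn one_ne_zero).differentiableAt (hU.mem_nhds hx))
  have h3 : DifferentiableAt ℝ (fun y => fderivWithin ℝ v U y (Pi.single j 1)) x := by
    have := (ContinuousLinearMap.apply ℝ ℝ (Pi.single j 1)).differentiableAt.comp x h2
    exact this
  apply h3.congr_of_eventuallyEq
  filter_upwards [hU.mem_nhds hx] with y hy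
  unfold pd; rw [fderivWithin_of_isOpen hU hy]

theorem gLap_rpow_mul
    (ginv : (Fin n → ℝ) → Matrix (Fin n) (Fin n) ℝ)
    (hsym : ∀ x i j, ginv x i j = ginv x j i)
    (hg : ∀ i j, ContDiffOn ℝ 1 (fun x => ginv x i j) {x : Fin n → ℝ | x ≠ 0})
    (v : (Fin n → ℝ) → ℝ)
    (hv : ContDiffOn ℝ 2 v {x : Fin n → ℝ | x ≠ 0})
    (hvpos : ∀ x : Fin n → ℝ, x ≠ 0 → 0 < v x)
    (f : (Fin n → ℝ) → ℝ) (hf : ContDiffOn ℝ (⊤ : ℕ∞) f {x : Fin n → ℝ | x ≠ 0})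
    (τ : ℝ)
    (x : Fin n → ℝ) (hx : x ≠ 0) :
    gLap ginv (fun y => v y ^ τ * f y) x =
      τ*(τ-1)*v x^(τ-2)*f x*gPair ginv v v x + 2*τ*v x^(τ-1)*gPair ginv v f x
      + τ*v x^(τ-1)*f x*gLap ginv v x + v x^τ*gLap ginv f x := by
  have hU : IsOpen {x : Fin n → ℝ | x ≠ 0} := isOpen_ne
  have hf2 : ContDiffOn ℝ 2 f {x : Fin n → ℝ | x ≠ 0} := hf.of_le (WithTop.coe_le_coe.mpr (le_top : (2:ℕ∞) ≤ ⊤))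
  have hvd : ∀ y : Fin n → ℝ, y ≠ 0 → DifferentiableAt ℝ v y := fun y hy =>
    (hv.differentiableOn (by norm_num)).differentiableAt (hU.mem_nhds hy)
  have hfd : ∀ y : Fin n → ℝ, y ≠ 0 → DifferentiableAt ℝ f y := fun y hy =>
    (hf2.differentiableOn (by norm_num)).differentiableAt (hU.mem_nhds hy)
  have hpdv : ∀ y : Fin n → ℝ, y ≠ 0 → ∀ j, DifferentiableAt ℝ (pd j v) y := fun y hy j =>
    pd_diff' hU hv hy j
  have hpdf : ∀ y : Fin n → ℝ, y ≠ 0 → ∀ j, DifferentiableAt ℝ (pd j f) y := fun y hy j =>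
    pd_diff' hU hf2 hy j
  have hgd : ∀ y : Fin n → ℝ, y ≠ 0 → ∀ i j, DifferentiableAt ℝ (fun z => ginv z i j) y :=
    fun y hy i j => ((hg i j).differentiableOn one_ne_zero).differentiableAt (hU.mem_nhds hy)
  have hrd : ∀ y : Fin n → ℝ, y ≠ 0 → ∀ σ : ℝ, DifferentiableAt ℝ (fun z => v z ^ σ) y :=
    fun y hy σ => (rpow_hasFDerivAt' (hvd y hy) (hvpos y hy).ne' σ).differentiableAt
  -- derivative of v^τ f
  have hpdw : ∀ y : Fin n → ℝ, y ≠ 0 → ∀ j,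
      pd j (fun z => v z ^ τ * f z) y
        = τ * v y ^ (τ-1) * pd j v y * f y + v y ^ τ * pd j f y := by
    intro y hy j
    rw [pd_mul' (hrd y hy τ) (hfd y hy), pd_rpow' (hvd y hy) (hvpos y hy).ne' τ]
  -- differentiability of the gradient components
  have dXv : ∀ i, DifferentiableAt ℝ (fun y => gGrad ginv v y i) x := fun i =>
    DifferentiableAt.fun_sum fun j _ => ((hgd x hx i j).mul (hpdv x hx j))
  have dXf : ∀ i, DifferentiableAt ℝ (fun y => gGrad ginv f y i) x := fun i =>
    DifferentiableAt.fun_sum fun j _ => ((hgd x hx i j).mul (hpdf x hx j))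
  have hvne : v x ≠ 0 := (hvpos x hx).ne'
  unfold gLap vdiv
  have step1 : ∀ i, pd i (fun y => gGrad ginv (fun z => v z ^ τ * f z) y i) x
      = pd i (fun y => τ * v y ^ (τ-1) * f y * gGrad ginv v y i
          + v y ^ τ * gGrad ginv f y i) x := by
    intro i
    apply pd_congr'
    filter_upwards [hU.mem_nhds hx] with y hy
    show gGrad ginv (fun z => v z ^ τ * f z) y i = _
    unfold gGrad
    rw [Finset.mul_sum, Finset.mul_sum, ← Finset.sum_add_distrib]
    exact Finset.sum_congr rfl fun j _ => by rw [hpdw y hy j]; ring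
  have step2 : ∀ i, pd i (fun y => τ * v y ^ (τ-1) * f y * gGrad ginv v y i
          + v y ^ τ * gGrad ginv f y i) x
      = (τ*(τ-1)*v x^(τ-2)*pd i v x*f x + τ*v x^(τ-1)*pd i f x) * gGrad ginv v x i
        + τ*v x^(τ-1)*f x * pd i (fun y => gGrad ginv v y i) x
        + τ*v x^(τ-1)*pd i v x * gGrad ginv f x i
        + v x^τ * pd i (fun y => gGrad ginv f y i) x := by
    intro i
    have d1 : DifferentiableAt ℝ (fun y => τ * v y ^ (τ-1)) x :=
      (differentiableAt_const τ).mul (hrd x hx (τ-1))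
    have d2 : DifferentiableAt ℝ (fun y => τ * v y ^ (τ-1) * f y) x := d1.mul (hfd x hx)
    have d3 : DifferentiableAt ℝ (fun y => τ * v y ^ (τ-1) * f y * gGrad ginv v y i) x :=
      d2.mul (dXv i)
    have d4 : DifferentiableAt ℝ (fun y => v y ^ τ * gGrad ginv f y i) x :=
      (hrd x hx τ).mul (dXf i)
    rw [pd_add' d3 d4, pd_mul' d2 (dXv i), pd_mul' d1 (hfd x hx),
      pd_const_mul' (hrd x hx (τ-1)) τ, pd_rpow' (hvd x hx) hvne (τ-1),
      pd_mul' (hrd x hx τ) (dXf i), pd_rpow' (hvd x hx) hvne τ]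
    have : τ - 1 - 1 = τ - 2 := by ring
    rw [this]; ring
  rw [Finset.sum_congr rfl fun i _ => (step1 i).trans (step2 i)]
  have e1 : ∑ i, pd i v x * gGrad ginv v x i = gPair ginv v v x := by
    unfold gGrad gPair
    simp only [Finset.mul_sum]
    exact Finset.sum_congr rfl fun i _ => Finset.sum_congr rfl fun j _ => by ring
  have e2 : ∑ i, pd i f x * gGrad ginv v x i = gPair ginv v f x := by
    unfold gGrad gPair
    simp only [Finset.mul_sum]
    rw [Finset.sum_comm]
    exact Finset.sum_congr rfl fun a _ => Finset.sum_congr rfl fun b _ => by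
      rw [hsym x a b]; ring
  have e3 : ∑ i, pd i v x * gGrad ginv f x i = gPair ginv v f x := by
    unfold gGrad gPair
    simp only [Finset.mul_sum]
    exact Finset.sum_congr rfl fun i _ => Finset.sum_congr rfl fun j _ => by ring
  have e4 : ∑ i, pd i (fun y => gGrad ginv v y i) x = gLap ginv v x := rfl
  have e5 : ∑ i, pd i (fun y => gGrad ginv f y i) x = gLap ginv f x := rfl
  calc ∑ i, ((τ*(τ-1)*v x^(τ-2)*pd i v x*f x + τ*v x^(τ-1)*pd i f x) * gGrad ginv v x i
        + τ*v x^(τ-1)*f x * pd i (fun y => gGrad ginv v y i) x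
        + τ*v x^(τ-1)*pd i v x * gGrad ginv f x i
        + v x^τ * pd i (fun y => gGrad ginv f y i) x)
      = ∑ i, (τ*(τ-1)*v x^(τ-2)*f x * (pd i v x * gGrad ginv v x i)
          + τ*v x^(τ-1) * (pd i f x * gGrad ginv v x i)
          + τ*v x^(τ-1)*f x * pd i (fun y => gGrad ginv v y i) x
          + τ*v x^(τ-1) * (pd i v x * gGrad ginv f x i)
          + v x^τ * pd i (fun y => gGrad ginv f y i) x) :=
        Finset.sum_congr rfl fun i _ => by ring
    _ = τ*(τ-1)*v x^(τ-2)*f x * (∑ i, pd i v x * gGrad ginv v x i)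
          + τ*v x^(τ-1) * (∑ i, pd i f x * gGrad ginv v x i)
          + τ*v x^(τ-1)*f x * (∑ i, pd i (fun y => gGrad ginv v y i) x)
          + τ*v x^(τ-1) * (∑ i, pd i v x * gGrad ginv f x i)
          + v x^τ * (∑ i, pd i (fun y => gGrad ginv f y i) x) := by
        simp only [Finset.sum_add_distrib, Finset.mul_sum]
    _ = _ := by rw [e1, e2, e3, e4, e5]; ring


/-- Decomposition v^{−τ}Δ_g(v^τ f) = P_{v,τ}^{(s)}(f) + 2τ(|∇_g v|²_g/v²)A_v(f),
    where P_{v,τ}^{(s)}(f) = Δ_g f + τ²(|∇_g v|²_g/v²)f. -/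
theorem conjugated_operator_decomposition
    (ginv : (Fin n → ℝ) → Matrix (Fin n) (Fin n) ℝ)
    (hsym : ∀ x i j, ginv x i j = ginv x j i)
    (hell : ∀ (x ξ : Fin n → ℝ), ξ ≠ 0 → 0 < ∑ i, ∑ j, ginv x i j * ξ i * ξ j)
    (hg : ∀ i j, ContDiffOn ℝ 1 (fun x => ginv x i j) {x : Fin n → ℝ | x ≠ 0})
    (v : (Fin n → ℝ) → ℝ)
    (hv : ContDiffOn ℝ 2 v {x : Fin n → ℝ | x ≠ 0})
    (hvpos : ∀ x : Fin n → ℝ, x ≠ 0 → 0 < v x)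
    (hgrad : ∀ x : Fin n → ℝ, x ≠ 0 → gPair ginv v v x ≠ 0)
    (f : (Fin n → ℝ) → ℝ) (hf : ContDiffOn ℝ (⊤ : ℕ∞) f {x : Fin n → ℝ | x ≠ 0})
    (τ : ℝ) (hτ : 1 ≤ τ)
    (x : Fin n → ℝ) (hx : x ≠ 0) :
    v x ^ (-τ) * gLap ginv (fun y => v y ^ τ * f y) x =
      (gLap ginv f x + τ ^ 2 * (gPair ginv v v x / v x ^ 2) * f x) +
        2 * τ * (gPair ginv v v x / v x ^ 2) * Av ginv v f x := by
  have hvx : 0 < v x := hvpos x hx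
  have hvne : v x ≠ 0 := hvx.ne'
  have hG : gPair ginv v v x ≠ 0 := hgrad x hx
  have key := gLap_rpow_mul ginv hsym hg v hv hvpos f hf τ x hx
  have r1 : v x ^ (-τ) * v x ^ (τ - 2) = (v x ^ 2)⁻¹ := by
    rw [← Real.rpow_add hvx, show -τ + (τ - 2) = -(2:ℕ) by push_cast; ring,
      Real.rpow_neg hvx.le, Real.rpow_natCast]
  have r2 : v x ^ (-τ) * v x ^ (τ - 1) = (v x)⁻¹ := by
    rw [← Real.rpow_add hvx, show -τ + (τ - 1) = (-1 : ℝ) by ring, Real.rpow_neg_one]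
  have r3 : v x ^ (-τ) * v x ^ τ = 1 := by
    rw [← Real.rpow_add hvx, neg_add_cancel, Real.rpow_zero]
  have key2 : v x ^ (-τ) * gLap ginv (fun y => v y ^ τ * f y) x
      = τ*(τ-1)*(v x ^ 2)⁻¹*f x*gPair ginv v v x
        + 2*τ*(v x)⁻¹*gPair ginv v f x
        + τ*(v x)⁻¹*f x*gLap ginv v x
        + 1*gLap ginv f x := by
    rw [key]
    calc v x ^ (-τ) * (τ*(τ-1)*v x^(τ-2)*f x*gPair ginv v v x
          + 2*τ*v x^(τ-1)*gPair ginv v f x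
          + τ*v x^(τ-1)*f x*gLap ginv v x + v x^τ*gLap ginv f x)
        = τ*(τ-1)*(v x ^ (-τ) * v x ^ (τ-2))*f x*gPair ginv v v x
          + 2*τ*(v x ^ (-τ) * v x ^ (τ-1))*gPair ginv v f x
          + τ*(v x ^ (-τ) * v x ^ (τ-1))*f x*gLap ginv v x
          + (v x ^ (-τ) * v x ^ τ)*gLap ginv f x := by ring
      _ = _ := by rw [r1, r2, r3]
  rw [key2]
  unfold Av Fv
  field_simp
  ring
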